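/- Let p ≥ 1, let Σ : ℝ^p → PD_p(ℝ) assign to each point a real positive definite p×p matrix, and let ξ be a probability measure on (0,∞). Define R^S(τ) = ∫_0^∞ exp(−τ²/t²) ξ(dt) for τ ≥ 0, and define C(x,y) = π^{-p/2} det((Σ_x+Σ_y)/2)^{-1/2} ∫_0^∞ exp(−Q_xy(x−y)/t²) ξ(dt). Then C(x,x) > 0 for every x, and for all x, y ∈ ℝ^p the normalized kernel satisfies C(x,y) / ( √(C(x,x)) · √(C(y,y)) ) = φ_xy · R^S( √(Q_xy(x−y)) ). -/

import Mathlib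

open MeasureTheory Matrix Real

/-- `Q_xy(h) = hᵀ ((Σx+Σy)/2)⁻¹ h`. -/
noncomputable def Qform {p : ℕ} (A B : Matrix (Fin p) (Fin p) ℝ) (h : Fin p → ℝ) : ℝ :=
  h ⬝ᵥ ((((2:ℝ)⁻¹ • (A + B))⁻¹).mulVec h)

/-- `φ_xy = det(Σx)^{1/4} det(Σy)^{1/4} det((Σx+Σy)/2)^{-1/2}`. -/
noncomputable def phiFactor {p : ℕ} (A B : Matrix (Fin p) (Fin p) ℝ) : ℝ :=
  A.det ^ ((1:ℝ) / 4) * B.det ^ ((1:ℝ) / 4) * ((2:ℝ)⁻¹ • (A + B)).det ^ (-(1:ℝ) / 2)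

/-!
On the diagonal the quadratic form vanishes, so `C x x = π^{-p/2} det(Σ_x)^{-1/2}` because
`ξ` is a probability measure carried by `(0, ∞)`. Dividing `C x y` by the geometric mean of the
diagonal values cancels the power of `π` and leaves `det(Σ_x)^{1/4} det(Σ_y)^{1/4}` in front of
`det((Σ_x+Σ_y)/2)^{-1/2} R^S(√Q_xy(x−y))`.
-/

theorem half_smul_add_self {M : Type*} [AddCommGroup M] [Module ℝ M] (a : M) :
    (2:ℝ)⁻¹ • (a + a) = a := by
  rw [← two_smul ℝ a, smul_smul, inv_mul_cancel₀ two_ne_zero, one_smul]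

theorem Matrix.PosDef.half_smul_add {n : Type*} [Fintype n] {A B : Matrix n n ℝ}
    (hA : A.PosDef) (hB : B.PosDef) : ((2:ℝ)⁻¹ • (A + B)).PosDef :=
  (hA.add hB).smul (by norm_num)

theorem Qform_nonneg {p : ℕ} {A B : Matrix (Fin p) (Fin p) ℝ}
    (hA : A.PosDef) (hB : B.PosDef) (h : Fin p → ℝ) : 0 ≤ Qform A B h := by
  unfold Qform
  simpa only [star_trivial] using
    (hA.half_smul_add hB).inv.posSemidef.dotProduct_mulVec_nonneg h

@[simp]
theorem Qform_zero {p : ℕ} (A B : Matrix (Fin p) (Fin p) ℝ) : Qform A B 0 = 0 := by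
  simp [Qform]

theorem setIntegral_one_of_measure_compl_eq_zero {α : Type*} [MeasurableSpace α]
    {μ : Measure α} [IsProbabilityMeasure μ] {s : Set α} (hs : MeasurableSet s)
    (hsc : μ sᶜ = 0) : ∫ _ in s, (1:ℝ) ∂μ = 1 := by
  rw [setIntegral_const, measureReal_def, (prob_compl_eq_zero_iff hs).mp hsc]
  simp

theorem sqrt_mul_rpow_neg_half {a d : ℝ} (ha : 0 ≤ a) (hd : 0 ≤ d) :
    √(a * d ^ (-(1:ℝ) / 2)) = √a * (d ^ ((1:ℝ) / 4))⁻¹ := by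
  rw [sqrt_mul ha, sqrt_eq_rpow (d ^ _), ← rpow_mul hd, ← rpow_neg hd]
  norm_num

theorem mul_div_sqrt_mul_sqrt_rpow_neg_half {a d e : ℝ} (ha : 0 < a) (hd : 0 < d)
    (he : 0 < e) (m : ℝ) :
    a * m / (√(a * d ^ (-(1:ℝ) / 2)) * √(a * e ^ (-(1:ℝ) / 2))) =
      d ^ ((1:ℝ) / 4) * e ^ ((1:ℝ) / 4) * m := by
  rw [sqrt_mul_rpow_neg_half ha.le hd.le, sqrt_mul_rpow_neg_half ha.le he.le,
    mul_mul_mul_comm, mul_self_sqrt ha.le]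
  have : 0 < d ^ ((1:ℝ) / 4) := rpow_pos_of_pos hd _
  have : 0 < e ^ ((1:ℝ) / 4) := rpow_pos_of_pos he _
  field_simp

theorem normalized_mixture_is_paciorek_general (p : ℕ)
    (S : (Fin p → ℝ) → Matrix (Fin p) (Fin p) ℝ) (hS : ∀ x, (S x).PosDef)
    (ξ : Measure ℝ) [IsProbabilityMeasure ξ] (hξ : ξ (Set.Iic 0) = 0)
    (RS : ℝ → ℝ)
    (hRS : ∀ τ : ℝ, 0 ≤ τ → RS τ = ∫ t in Set.Ioi (0:ℝ), Real.exp (-τ ^ 2 / t ^ 2) ∂ξ)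
    (C : (Fin p → ℝ) → (Fin p → ℝ) → ℝ)
    (hC : ∀ x y, C x y = Real.pi ^ (-(p : ℝ) / 2) *
      ((2:ℝ)⁻¹ • (S x + S y)).det ^ (-(1:ℝ) / 2) *
      ∫ t in Set.Ioi (0:ℝ), Real.exp (-(Qform (S x) (S y) (x - y)) / t ^ 2) ∂ξ) :
    (∀ x : Fin p → ℝ, 0 < C x x) ∧
    ∀ x y : Fin p → ℝ,
      C x y / (Real.sqrt (C x x) * Real.sqrt (C y y)) =
        phiFactor (S x) (S y) * RS (Real.sqrt (Qform (S x) (S y) (x - y))) := by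
  have hξ_Ioi : ∫ _ in Set.Ioi (0:ℝ), (1:ℝ) ∂ξ = 1 :=
    setIntegral_one_of_measure_compl_eq_zero measurableSet_Ioi (by rwa [Set.compl_Ioi])
  have hC_diag : ∀ x, C x x = π ^ (-(p : ℝ) / 2) * (S x).det ^ (-(1:ℝ) / 2) := fun x => by
    simp only [hC, sub_self, Qform_zero, half_smul_add_self]
    simp [hξ_Ioi]
  refine ⟨fun x => by rw [hC_diag]; have := (hS x).det_pos; positivity, fun x y => ?_⟩
  have hQ := Qform_nonneg (hS x) (hS y) (x - y)
  rw [hC, mul_assoc, hC_diag, hC_diag, mul_div_sqrt_mul_sqrt_rpow_neg_half (by positivity)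
    (hS x).det_pos (hS y).det_pos, hRS _ (sqrt_nonneg _), sq_sqrt hQ, phiFactor]
  ring

/-- normalizing the mixture covariance yields the Paciorek–Schervish
class `R^{NS}(x,y) = φ_xy R^S(√(Q_xy(x−y)))`. -/
theorem normalized_mixture_is_paciorek (p : ℕ) (hp : 1 ≤ p)
    (S : (Fin p → ℝ) → Matrix (Fin p) (Fin p) ℝ) (hS : ∀ x, (S x).PosDef)
    (ξ : Measure ℝ) [IsProbabilityMeasure ξ] (hξ : ξ (Set.Iic 0) = 0)
    (RS : ℝ → ℝ)
    (hRS : ∀ τ : ℝ, 0 ≤ τ → RS τ = ∫ t in Set.Ioi (0:ℝ), Real.exp (-τ ^ 2 / t ^ 2) ∂ξ)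
    (C : (Fin p → ℝ) → (Fin p → ℝ) → ℝ)
    (hC : ∀ x y, C x y = Real.pi ^ (-(p : ℝ) / 2) *
      ((2:ℝ)⁻¹ • (S x + S y)).det ^ (-(1:ℝ) / 2) *
      ∫ t in Set.Ioi (0:ℝ), Real.exp (-(Qform (S x) (S y) (x - y)) / t ^ 2) ∂ξ) :
    (∀ x : Fin p → ℝ, 0 < C x x) ∧
    ∀ x y : Fin p → ℝ,
      C x y / (Real.sqrt (C x x) * Real.sqrt (C y y)) =
        phiFactor (S x) (S y) * RS (Real.sqrt (Qform (S x) (S y) (x - y))) :=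
  normalized_mixture_is_paciorek_general p S hS ξ hξ RS hRS C hC
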